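/- arXiv:2006.16839 — 5 statements merged into one kernel-verified Lean document; each statement's English description precedes it below -/
import Mathlib

section
/- Let B be a real N×N matrix and η ∈ ℝ. Then exp(ηB) − I is not invertible if and only if there exists a complex eigenvalue λ of the complexification of B with exp(ηλ) = 1. -/
/-!
Over `ℂ`, `exp (c • A) - 1` is singular iff `1 ∈ σ (exp (c • A))`, and for complex matrices
`σ (exp (c • A)) = exp (c • σ A)`. The inclusion `⊇` holds because `exp (c • A)` acts on an
eigenvector of `A` with eigenvalue `μ` as multiplication by `exp (c μ)`. For `⊆`, `exp (c • A)`
lies in the subalgebra generated by `A` (closed, being finite-dimensional), so it equals `p(A)`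
for a polynomial `p`; the polynomial spectral mapping theorem gives an eigenvalue `μ` of `A` with
`p(μ) = z`, and comparing the two actions on an eigenvector gives `exp (c μ) = p(μ) = z`.
Complexification does not change invertibility, since it commutes with `exp` and `det`.
-/

open Matrix Polynomial NormedSpace

theorem Subalgebra.exp_mem_of_finiteDimensional {𝕜 𝔸 : Type*} [NontriviallyNormedField 𝕜]
    [CompleteSpace 𝕜] [Ring 𝔸] [Algebra 𝕜 𝔸] [Algebra ℚ 𝔸] [IsScalarTower ℚ 𝕜 𝔸]
    [TopologicalSpace 𝔸] [IsTopologicalRing 𝔸] [ContinuousSMul 𝕜 𝔸] [T2Space 𝔸]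
    [FiniteDimensional 𝕜 𝔸] (S : Subalgebra 𝕜 𝔸) {a : 𝔸} (ha : a ∈ S) : exp a ∈ S :=
  exp_mem (R := 𝕜) (s := S) S.toSubmodule.closed_of_finiteDimensional ha

namespace Matrix

variable {n : Type*} [Fintype n] [DecidableEq n]

theorem isUnit_map_iff {K L : Type*} [Field K] [Field L] (f : K →+* L) (M : Matrix n n K) :
    IsUnit (M.map f) ↔ IsUnit M := by
  rw [isUnit_iff_isUnit_det, isUnit_iff_isUnit_det, ← RingHom.mapMatrix_apply, ← RingHom.map_det,
    _root_.isUnit_map_iff]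

theorem mem_spectrum_iff_exists_mulVec_eq_smul {K : Type*} [Field K] (A : Matrix n n K) (μ : K) :
    μ ∈ spectrum K A ↔ ∃ v ≠ 0, A *ᵥ v = μ • v := by
  rw [spectrum.mem_iff, isUnit_iff_isUnit_det, isUnit_iff_ne_zero, not_not,
    ← exists_mulVec_eq_zero_iff]
  simp only [Algebra.algebraMap_eq_smul_one, sub_mulVec, smul_mulVec, one_mulVec, sub_eq_zero,
    eq_comm]

theorem aeval_mulVec_of_mulVec_eq_smul {R : Type*} [CommRing R] {A : Matrix n n R} {v : n → R}
    {μ : R} (h : A *ᵥ v = μ • v) (p : R[X]) : aeval A p *ᵥ v = p.eval μ • v := by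
  have := Module.End.aeval_apply_of_mem_apply_eq_smul (f := toLinAlgEquiv' A) (p := p)
    (by simpa [toLinAlgEquiv'_apply] using h)
  rwa [aeval_algHom_apply, toLinAlgEquiv'_apply] at this

section OperatorNorm

open scoped Norms.Operator

theorem exp_mulVec_of_mulVec_eq_smul {𝕜 : Type*} [RCLike 𝕜] {A : Matrix n n 𝕜} {v : n → 𝕜}
    {μ : 𝕜} (h : A *ᵥ v = μ • v) : exp A *ᵥ v = exp μ • v := by
  have hA := (exp_series_hasSum_exp' (𝕂 := 𝕜) A).map (mulVec.addMonoidHomLeft v)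
    (continuous_id.matrix_mulVec continuous_const)
  refine hA.unique ((exp_series_hasSum_exp' (𝕂 := 𝕜) μ).smul_const v |>.congr_fun fun k => ?_)
  have hpow := aeval_mulVec_of_mulVec_eq_smul h (X ^ k)
  rw [aeval_X_pow, eval_pow, eval_X] at hpow
  change ((k.factorial⁻¹ : 𝕜) • A ^ k) *ᵥ v = _
  rw [smul_mulVec, hpow, smul_smul, smul_eq_mul]

theorem map_exp {𝕜 𝕜' : Type*} [RCLike 𝕜] [RCLike 𝕜'] (f : 𝕜 →+* 𝕜') (hf : Continuous f)
    (A : Matrix n n 𝕜) : (exp A).map f = exp (A.map f) :=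
  NormedSpace.map_exp f.mapMatrix (continuous_id.matrix_map hf) A

end OperatorNorm

theorem exp_smul_mem_adjoin_singleton (A : Matrix n n ℂ) (c : ℂ) :
    exp (c • A) ∈ Algebra.adjoin ℂ {A} :=
  Subalgebra.exp_mem_of_finiteDimensional _
    (Subalgebra.smul_mem _ (Algebra.self_mem_adjoin_singleton ℂ A) c)

theorem mem_spectrum_exp_smul_iff (A : Matrix n n ℂ) (c z : ℂ) :
    z ∈ spectrum ℂ (exp (c • A)) ↔ ∃ μ ∈ spectrum ℂ A, Complex.exp (c * μ) = z := by
  have exp_smul_mulVec {μ : ℂ} {v : n → ℂ} (hv : A *ᵥ v = μ • v) :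
      exp (c • A) *ᵥ v = Complex.exp (c * μ) • v := by
    rw [Complex.exp_eq_exp_ℂ]
    exact exp_mulVec_of_mulVec_eq_smul (by rw [smul_mulVec, hv, smul_smul])
  constructor
  · intro hz
    have : Nontrivial (Matrix n n ℂ) := by
      by_contra h
      rw [not_nontrivial_iff_subsingleton] at h
      simp [spectrum.of_subsingleton] at hz
    obtain ⟨p, hp⟩ : ∃ p : ℂ[X], aeval A p = exp (c • A) := by
      simpa [Algebra.adjoin_singleton_eq_range_aeval] using exp_smul_mem_adjoin_singleton A c
    rw [← hp, spectrum.map_polynomial_aeval_of_nonempty A p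
      (spectrum.nonempty_of_isAlgClosed_of_finiteDimensional ℂ A)] at hz
    obtain ⟨μ, hμ, rfl⟩ := hz
    obtain ⟨v, hv, hAv⟩ := (mem_spectrum_iff_exists_mulVec_eq_smul A μ).1 hμ
    refine ⟨μ, hμ, smul_left_injective ℂ hv ?_⟩
    calc Complex.exp (c * μ) • v = exp (c • A) *ᵥ v := (exp_smul_mulVec hAv).symm
      _ = p.eval μ • v := by rw [← hp, aeval_mulVec_of_mulVec_eq_smul hAv]
  · rintro ⟨μ, hμ, rfl⟩
    obtain ⟨v, hv, hAv⟩ := (mem_spectrum_iff_exists_mulVec_eq_smul A μ).1 hμ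
    exact (mem_spectrum_iff_exists_mulVec_eq_smul _ _).2 ⟨v, hv, exp_smul_mulVec hAv⟩

end Matrix

/-- For a real `N × N` matrix `B` and `η ∈ ℝ`, the matrix `exp(ηB) − I`
fails to be invertible if and only if the complexification of `B` has a complex eigenvalue `μ`
with `exp(ημ) = 1`. -/
theorem stmt_2 (N : ℕ) (B : Matrix (Fin N) (Fin N) ℝ) (η : ℝ) :
    ¬ IsUnit (NormedSpace.exp (η • B) - 1) ↔
      ∃ (μ : ℂ) (v : Fin N → ℂ), v ≠ 0 ∧
        (B.map (fun x => (x : ℂ))).mulVec v = μ • v ∧ Complex.exp (η * μ) = 1 := by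
  have hcomplexify : (exp (η • B) - 1).map Complex.ofRealHom =
      exp ((η : ℂ) • B.map (fun x => (x : ℂ))) - 1 := by
    rw [← RingHom.mapMatrix_apply, map_sub, map_one, RingHom.mapMatrix_apply,
      Matrix.map_exp _ Complex.continuous_ofReal, Matrix.map_smul' _ _ _ (map_mul _)]
    rfl
  rw [← Matrix.isUnit_map_iff Complex.ofRealHom, hcomplexify, ← neg_sub, IsUnit.neg_iff,
    ← map_one (algebraMap ℂ _), ← spectrum.mem_iff, mem_spectrum_exp_smul_iff]
  simp only [mem_spectrum_iff_exists_mulVec_eq_smul, ← exists_and_right, and_assoc]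
end

section
/- Let 1 ≤ k ≤ n−1, let A₀ be a real symmetric positive definite 2k×2k matrix, and let A₁ be a real symmetric invertible 2(n−k)×2(n−k) matrix such that 𝕁_{n−k}A₁ is hyperbolic. Define H₀(x) := ½⟨A₀x,x⟩ − 1, H₁(y) := ½⟨A₁y,y⟩ and H(x,y) := H₀(x) + H₁(y) on ℝ^{2k} × ℝ^{2(n−k)}. Fix η ∈ ℝ with η ≠ 0 and let v = (v₀, v₁) : ℝ → ℝ^{2k} × ℝ^{2(n−k)} be smooth and 1-periodic. Then the following are equivalent: (i) v₀'(t) = η𝕁_k A₀ v₀(t), v₁'(t) = η𝕁_{n−k} A₁ v₁(t) and H(v(t)) = 0 for all t; (ii) v₁ ≡ 0, v₀'(t) = η𝕁_k A₀ v₀(t) and H₀(v₀(t)) = 0 for all t. (This is the 1-to-1 correspondence between the periodic orbits of X_H on Σ = H^{−1}(0) and the periodic orbits of X_{H₀} on Σ₀ = H₀^{−1}(0).) -/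
open Matrix

/-- The standard complex structure `𝕁_m` on `ℝ^{2m} = ℝ^m × ℝ^m`, as a block matrix
`[[0, I], [−I, 0]]`. -/
noncomputable def Jmat (m : ℕ) : Matrix (Fin m ⊕ Fin m) (Fin m ⊕ Fin m) ℝ :=
  Matrix.fromBlocks 0 1 (-1) 0

/-- A real square matrix is *hyperbolic* if every complex eigenvalue of its
complexification has nonzero real part. -/
def Matrix.Hyperbolic {I : Type*} [Fintype I] (B : Matrix I I ℝ) : Prop :=
  ∀ (μ : ℂ) (w : I → ℂ), w ≠ 0 →
    (B.map (fun x => (x : ℂ))).mulVec w = μ • w → μ.re ≠ 0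

section Aux

open NormedSpace
open scoped Nat

attribute [local instance] Matrix.linftyOpNormedRing Matrix.linftyOpNormedAlgebra
-- eigenvector of exp
lemma aux_exp_mulVec_eigen {I : Type*} [Fintype I] [DecidableEq I]
    (M : Matrix I I ℂ) (x : I → ℂ) (μ : ℂ) (hx : M.mulVec x = μ • x) :
    (exp M).mulVec x = Complex.exp μ • x := by
  have hpow : ∀ n : ℕ, (M ^ n).mulVec x = (μ ^ n) • x := by
    intro n
    induction n with
    | zero => simp
    | succ n ih =>
      rw [pow_succ, ← Matrix.mulVec_mulVec, hx, Matrix.mulVec_smul, ih]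
      rw [smul_smul, mul_comm, pow_succ]
  let Φl : Matrix I I ℂ →ₗ[ℂ] (I → ℂ) :=
    { toFun := fun B => B.mulVec x
      map_add' := fun B C => Matrix.add_mulVec B C x
      map_smul' := fun c B => Matrix.smul_mulVec c B x }
  let Φ : Matrix I I ℂ →L[ℂ] (I → ℂ) := LinearMap.toContinuousLinearMap Φl
  have hΦ : ∀ B, Φ B = B.mulVec x := fun _ => rfl
  have hsum : Summable fun n : ℕ => (n !⁻¹ : ℝ) • M ^ n := expSeries_summable' (𝕂 := ℝ) M
  calc (exp M).mulVec x = Φ (∑' n : ℕ, (n !⁻¹ : ℝ) • M ^ n) := by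
        rw [hΦ, exp_eq_tsum ℝ]
    _ = ∑' n : ℕ, Φ ((n !⁻¹ : ℝ) • M ^ n) := Φ.map_tsum hsum
    _ = ∑' n : ℕ, ((n !⁻¹ : ℝ) • μ ^ n) • x := by
        refine tsum_congr fun n => ?_
        rw [hΦ, Matrix.smul_mulVec, hpow, ← smul_assoc]
    _ = (∑' n : ℕ, (n !⁻¹ : ℝ) • μ ^ n) • x :=
        (expSeries_summable' (𝕂 := ℝ) μ).tsum_smul_const x
    _ = Complex.exp μ • x := by
        rw [Complex.exp_eq_exp_ℂ, exp_eq_tsum ℝ]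

lemma aux_fixed_eq_zero {I : Type*} [Fintype I] [DecidableEq I] (M : Matrix I I ℂ)
    (hM : ∀ (μ : ℂ) (w : I → ℂ), w ≠ 0 → M.mulVec w = μ • w → μ.re ≠ 0)
    (w : I → ℂ) (hw : (exp M).mulVec w = w) : w = 0 := by
  by_contra hw0
  have hcomm : Commute M (exp M) := (Commute.refl M).exp_right
  set S := Matrix.toLin' (exp M) with hS
  set T := Matrix.toLin' M with hT
  have hST : ∀ z, S (T z) = T (S z) := by
    intro z
    have h1 : Matrix.toLin' (exp M * M) = Matrix.toLin' (M * exp M) := by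
      rw [hcomm.eq]
    have h2 := LinearMap.congr_fun h1 z
    simpa [hS, hT, Matrix.toLin'_apply, ← Matrix.mulVec_mulVec] using h2
  set E := Module.End.eigenspace S 1 with hE
  have hwE : w ∈ E := by
    rw [hE, Module.End.mem_eigenspace_iff]
    simpa [hS, Matrix.toLin'_apply] using hw
  have hinv : ∀ z ∈ E, T z ∈ E := by
    intro z hz
    rw [Module.End.mem_eigenspace_iff] at hz ⊢
    rw [one_smul] at hz ⊢
    rw [hST, hz]
  let T' : E →ₗ[ℂ] E := T.restrict hinv
  haveI : Nontrivial E := ⟨⟨w, hwE⟩, 0, by simpa [Submodule.mk_eq_zero] using hw0⟩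
  obtain ⟨μ, hμ⟩ := Module.End.exists_eigenvalue T'
  obtain ⟨v, hv⟩ := hμ.exists_hasEigenvector
  have hvne : (v : I → ℂ) ≠ 0 := fun h => hv.2 (by simpa [Submodule.coe_eq_zero] using h)
  have hveig : M.mulVec (v : I → ℂ) = μ • (v : I → ℂ) := by
    have := hv.apply_eq_smul
    have h2 := congrArg (Subtype.val) this
    simpa [T', hT, LinearMap.restrict_coe_apply, Matrix.toLin'_apply] using h2
  have hvfix : (exp M).mulVec (v : I → ℂ) = (v : I → ℂ) := by
    have h3 : S (v : I → ℂ) = (1 : ℂ) • (v : I → ℂ) := Module.End.mem_eigenspace_iff.mp v.2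
    simpa [hS, Matrix.toLin'_apply, one_smul] using h3
  have hexp : Complex.exp μ • (v : I → ℂ) = (v : I → ℂ) := by
    rw [← aux_exp_mulVec_eigen M _ μ hveig, hvfix]
  have hexp1 : Complex.exp μ = 1 := by
    by_contra h
    have : (Complex.exp μ - 1) • (v : I → ℂ) = 0 := by
      rw [sub_smul, one_smul, hexp, sub_self]
    rcases smul_eq_zero.mp this with h' | h'
    · exact h (sub_eq_zero.mp h')
    · exact hvne h'
  have hre : μ.re = 0 := by
    have h4 : ‖Complex.exp μ‖ = ‖(1 : ℂ)‖ := congrArg _ hexp1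
    rw [Complex.norm_exp, norm_one] at h4
    exact Real.exp_eq_exp.mp (by rw [h4, Real.exp_zero])
  exact hM μ (v : I → ℂ) hvne hveig hre

lemma aux_ode_exp {I : Type*} [Fintype I] [DecidableEq I] (M : Matrix I I ℝ)
    (u : ℝ → I → ℝ) (hu : ∀ t, HasDerivAt u (M.mulVec (u t)) t) (t : ℝ) :
    u t = (exp (t • M)).mulVec (u 0) := by
  set f : ℝ → Matrix I I ℝ := fun s => exp ((-s) • M) with hf
  have hfd : ∀ s, HasDerivAt f (-(M * f s)) s := by
    intro s
    have h1 : HasDerivAt (fun r : ℝ => exp (r • M)) (M * exp ((-s) • M)) (-s) :=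
      hasDerivAt_exp_smul_const' M (-s)
    have h2 : HasDerivAt (fun r : ℝ => -r) (-1 : ℝ) s := (hasDerivAt_id s).neg
    have h3 := h1.scomp s h2
    rw [hf]
    simp only [Function.comp_def, neg_smul, one_smul] at h3 ⊢
    exact h3
  set g : ℝ → I → ℝ := fun s => (f s).mulVec (u s) with hg
  have hgd : ∀ s, HasDerivAt g 0 s := by
    intro s
    rw [hasDerivAt_pi]
    intro j
    have hui : ∀ i, HasDerivAt (fun s' => u s' i) (M.mulVec (u s) i) s :=
      fun i => hasDerivAt_pi.mp (hu s) i
    have hfij : ∀ a b, HasDerivAt (fun s' => f s' a b) ((-(M * f s)) a b) s := by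
      intro a b
      let L : Matrix I I ℝ →ₗ[ℝ] ℝ :=
        { toFun := fun B => B a b, map_add' := fun _ _ => rfl, map_smul' := fun _ _ => rfl }
      have h4 := (LinearMap.toContinuousLinearMap L).hasFDerivAt.comp_hasDerivAt s (hfd s)
      exact h4
    have hsumd : HasDerivAt (fun s' => ∑ i, f s' j i * u s' i)
        (∑ i, ((-(M * f s)) j i * u s i + f s j i * M.mulVec (u s) i)) s :=
      HasDerivAt.fun_sum fun i _ => (hfij j i).mul (hui i)
    have hc : M * f s = f s * M := (((Commute.refl M).smul_right (-s)).exp_right).eq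
    have key : (∑ i, ((-(M * f s)) j i * u s i + f s j i * M.mulVec (u s) i)) = 0 := by
      rw [Finset.sum_add_distrib]
      have h6 : ∑ i, f s j i * M.mulVec (u s) i = ((f s * M).mulVec (u s)) j := by
        simp only [Matrix.mulVec, dotProduct, Matrix.mul_apply, Finset.sum_mul,
          Finset.mul_sum]
        rw [Finset.sum_comm]
        exact Finset.sum_congr rfl fun x _ => Finset.sum_congr rfl fun y _ => by ring
      have h7 : ∑ i, (-(M * f s)) j i * u s i = -(((M * f s)).mulVec (u s) j) := by
        simp [Matrix.mulVec, dotProduct]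
      rw [h6, h7, hc]
      ring
    rw [key] at hsumd
    exact hsumd
  have hgdiff : Differentiable ℝ g := fun s => (hgd s).differentiableAt
  have hgconst : g t = g 0 := is_const_of_deriv_eq_zero hgdiff (fun s => (hgd s).deriv) t 0
  have h9 : g t = u 0 := by
    rw [hgconst]
    simp [hg, hf]
  have h10 : exp (t • M) * f t = 1 := by
    show exp (t • M) * exp ((-t) • M) = 1
    rw [← Matrix.exp_add_of_commute _ _ (((Commute.refl M).smul_right (-t)).smul_left t)]
    rw [← add_smul]
    simp
  calc u t = (exp (t • M) * f t).mulVec (u t) := by rw [h10, Matrix.one_mulVec]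
    _ = (exp (t • M)).mulVec (g t) := by rw [← Matrix.mulVec_mulVec]
    _ = (exp (t • M)).mulVec (u 0) := by rw [h9]

lemma aux_periodic_zero {I : Type*} [Fintype I] [DecidableEq I] (M : Matrix I I ℝ)
    (hM : ∀ (μ : ℂ) (w : I → ℂ), w ≠ 0 →
      (M.map (fun x => (x : ℂ))).mulVec w = μ • w → μ.re ≠ 0)
    (u : ℝ → I → ℝ) (hu : ∀ t, HasDerivAt u (M.mulVec (u t)) t)
    (hper : u 1 = u 0) : ∀ t, u t = 0 := by
  have h1 : (exp M).mulVec (u 0) = u 0 := by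
    have h0 := aux_ode_exp M u hu 1
    rw [hper, one_smul] at h0
    exact h0.symm
  set Mc := M.map (fun x => (x : ℂ)) with hMc
  have hmapexp : (exp M).map (fun x => (x : ℂ)) = exp Mc := by
    have hcont : Continuous ((algebraMap ℝ ℂ).mapMatrix : Matrix I I ℝ →+* Matrix I I ℂ) :=
      Continuous.matrix_map continuous_id Complex.continuous_ofReal
    exact map_exp ((algebraMap ℝ ℂ).mapMatrix) hcont M
  have h2 : (exp Mc).mulVec (fun i => (u 0 i : ℂ)) = fun i => (u 0 i : ℂ) := by
    funext i
    rw [← hmapexp]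
    have h1i := congrFun h1 i
    simp only [Matrix.mulVec, dotProduct, Matrix.map_apply] at h1i ⊢
    exact_mod_cast h1i
  have h3 := aux_fixed_eq_zero Mc hM _ h2
  have h4 : u 0 = 0 := by
    funext i
    have h5 := congrFun h3 i
    simp only [Pi.zero_apply] at h5 ⊢
    exact_mod_cast h5
  intro t
  rw [aux_ode_exp M u hu t, h4, Matrix.mulVec_zero]

end Aux

/-- For `H(x,y) = H₀(x) + H₁(y)` with `A₀` positive definite and
`𝕁_{n−k}A₁` hyperbolic, and `η ≠ 0`, a smooth `1`-periodic loop `v = (v₀, v₁)` solves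
`v' = η X_H(v)` inside `H⁻¹(0)` if and only if `v₁ ≡ 0` and `v₀` solves `v₀' = η X_{H₀}(v₀)`
inside `H₀⁻¹(0)`. -/
theorem stmt_3 (n k : ℕ) (hk : 1 ≤ k) (hkn : k ≤ n - 1)
    (A₀ : Matrix (Fin k ⊕ Fin k) (Fin k ⊕ Fin k) ℝ) (hA₀ : A₀.PosDef)
    (A₁ : Matrix (Fin (n - k) ⊕ Fin (n - k)) (Fin (n - k) ⊕ Fin (n - k)) ℝ)
    (hA₁sym : A₁ᵀ = A₁) (hA₁inv : IsUnit A₁)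
    (hA₁hyp : (Jmat (n - k) * A₁).Hyperbolic)
    (η : ℝ) (hη : η ≠ 0)
    (v₀ : ℝ → (Fin k ⊕ Fin k) → ℝ) (v₁ : ℝ → (Fin (n - k) ⊕ Fin (n - k)) → ℝ)
    (hv₀ : ContDiff ℝ (⊤ : ℕ∞) v₀) (hv₁ : ContDiff ℝ (⊤ : ℕ∞) v₁)
    (hv₀per : ∀ t, v₀ (t + 1) = v₀ t) (hv₁per : ∀ t, v₁ (t + 1) = v₁ t) :
    ((∀ t, deriv v₀ t = η • (Jmat k).mulVec (A₀.mulVec (v₀ t))) ∧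
     (∀ t, deriv v₁ t = η • (Jmat (n - k)).mulVec (A₁.mulVec (v₁ t))) ∧
     (∀ t, ((1 / 2) * (A₀.mulVec (v₀ t) ⬝ᵥ v₀ t) - 1) +
        (1 / 2) * (A₁.mulVec (v₁ t) ⬝ᵥ v₁ t) = 0)) ↔
    ((∀ t, v₁ t = 0) ∧
     (∀ t, deriv v₀ t = η • (Jmat k).mulVec (A₀.mulVec (v₀ t))) ∧
     (∀ t, (1 / 2) * (A₀.mulVec (v₀ t) ⬝ᵥ v₀ t) - 1 = 0)) := by
  set M : Matrix (Fin (n - k) ⊕ Fin (n - k)) (Fin (n - k) ⊕ Fin (n - k)) ℝ :=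
    η • (Jmat (n - k) * A₁) with hM
  have hηc : (η : ℂ) ≠ 0 := Complex.ofReal_ne_zero.mpr hη
  have hMhyp : ∀ (μ : ℂ) (w : (Fin (n - k) ⊕ Fin (n - k)) → ℂ), w ≠ 0 →
      (M.map (fun x => (x : ℂ))).mulVec w = μ • w → μ.re ≠ 0 := by
    intro μ w hw hmw
    have hmap : M.map (fun x => (x : ℂ))
        = (η : ℂ) • ((Jmat (n - k) * A₁).map (fun x => (x : ℂ))) := by
      ext i j
      simp [hM, Matrix.map_apply]
    rw [hmap, Matrix.smul_mulVec] at hmw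
    have heig : ((Jmat (n - k) * A₁).map (fun x => (x : ℂ))).mulVec w = (μ / (η : ℂ)) • w := by
      have h := congrArg (fun z => ((η : ℂ))⁻¹ • z) hmw
      simp only [smul_smul, inv_mul_cancel₀ hηc, one_smul] at h
      rw [h, div_eq_inv_mul]
    have hre := hA₁hyp (μ / (η : ℂ)) w hw heig
    intro h0
    apply hre
    rw [Complex.div_ofReal_re, h0, zero_div]
  constructor
  · rintro ⟨h0, h1, hE⟩
    have hdiff : Differentiable ℝ v₁ := hv₁.differentiable (by simp)
    have hode : ∀ t, HasDerivAt v₁ (M.mulVec (v₁ t)) t := by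
      intro t
      have hd := (hdiff t).hasDerivAt
      rw [h1 t] at hd
      rw [hM, Matrix.smul_mulVec, ← Matrix.mulVec_mulVec]
      exact hd
    have hzero := aux_periodic_zero M hMhyp v₁ hode (by simpa using hv₁per 0)
    refine ⟨hzero, h0, fun t => ?_⟩
    have hEt := hE t
    rw [hzero t] at hEt
    simpa using hEt
  · rintro ⟨h1, h0, hE⟩
    have hv1 : v₁ = fun _ => 0 := funext h1
    refine ⟨h0, fun t => ?_, fun t => ?_⟩
    · rw [hv1]
      simp
    · rw [h1 t]
      have := hE t
      simp only [Matrix.mulVec_zero, zero_dotProduct, dotProduct_zero,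
        mul_zero, add_zero]
      linarith
end

section
/- Let 1 ≤ k ≤ n−1, let A₀ be a real symmetric positive definite 2k×2k matrix, let A₁ be a real symmetric invertible 2(n−k)×2(n−k) matrix such that 𝕁_{n−k}A₁ is hyperbolic, and define H(x,y) := ½⟨A₀x,x⟩ + ½⟨A₁y,y⟩ − 1 on ℝ^{2k} × ℝ^{2(n−k)}. Then the hypersurface Σ := H^{−1}(0) carries a closed characteristic: there exist η > 0 and a nonconstant smooth 1-periodic loop v = (v₀, v₁) : ℝ → ℝ^{2k} × ℝ^{2(n−k)} with v₀'(t) = η𝕁_k A₀ v₀(t), v₁'(t) = η𝕁_{n−k} A₁ v₁(t) and H(v(t)) = 0 for all t. -/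
open Matrix

section Aux

variable {ι : Type*} [Fintype ι]

lemma antisym_dot_self (N : Matrix ι ι ℝ) (hN : Nᵀ = -N) (x : ι → ℝ) :
    x ⬝ᵥ N *ᵥ x = 0 := by
  have h : x ⬝ᵥ N *ᵥ x = (Nᵀ *ᵥ x) ⬝ᵥ x := by
    rw [Matrix.dotProduct_mulVec, Matrix.mulVec_transpose]
  rw [hN, Matrix.neg_mulVec, neg_dotProduct, dotProduct_comm] at h
  rw [dotProduct_comm]
  linarith

lemma sym_dot_comm (A : Matrix ι ι ℝ) (hA : Aᵀ = A) (x y : ι → ℝ) :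
    x ⬝ᵥ A *ᵥ y = y ⬝ᵥ A *ᵥ x := by
  rw [Matrix.dotProduct_mulVec, ← Matrix.mulVec_transpose, hA, dotProduct_comm]

lemma Jmat_transpose (m : ℕ) : (Jmat m)ᵀ = -(Jmat m) := by
  simp [Jmat, Matrix.fromBlocks_transpose, Matrix.fromBlocks_neg]

lemma Jmat_mul_Jmat (m : ℕ) : Jmat m * Jmat m = -1 := by
  simp [Jmat, Matrix.fromBlocks_multiply, ← Matrix.fromBlocks_one, Matrix.fromBlocks_neg]

lemma Jmat_antisym (m : ℕ) (x y : (Fin m ⊕ Fin m) → ℝ) :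
    (Jmat m *ᵥ x) ⬝ᵥ y = -(x ⬝ᵥ Jmat m *ᵥ y) := by
  have h := antisym_dot_self (Jmat m) (Jmat_transpose m) (x + y)
  have hx := antisym_dot_self (Jmat m) (Jmat_transpose m) x
  have hy := antisym_dot_self (Jmat m) (Jmat_transpose m) y
  rw [Matrix.mulVec_add, dotProduct_add, add_dotProduct, add_dotProduct, hx] at h
  rw [hy] at h
  rw [dotProduct_comm (Jmat m *ᵥ x) y]
  linarith

end Aux

lemma exists_rotation (m : ℕ) (hm : 0 < m)
    (A : Matrix (Fin m ⊕ Fin m) (Fin m ⊕ Fin m) ℝ) (hA : A.PosDef) :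
    ∃ (ω : ℝ) (a b : (Fin m ⊕ Fin m) → ℝ), 0 < ω ∧
      (Jmat m * A) *ᵥ a = (-ω) • b ∧ (Jmat m * A) *ᵥ b = ω • a ∧
      (a ≠ 0 ∨ b ≠ 0) := by
  haveI : Nonempty (Fin m) := ⟨⟨0, hm⟩⟩
  set M := Jmat m * A with hMdef
  have hAsym : Aᵀ = A := by
    have := hA.1
    rwa [Matrix.IsHermitian, Matrix.conjTranspose_eq_transpose_of_trivial] at this
  obtain ⟨μ, hμ⟩ := Module.End.exists_eigenvalue ((M.map ((↑) : ℝ → ℂ)).mulVecLin)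
  obtain ⟨z, hz⟩ := hμ.exists_hasEigenvector
  have hz0 : z ≠ 0 := hz.2
  have hzeq : (M.map ((↑) : ℝ → ℂ)) *ᵥ z = μ • z := by
    simpa [Matrix.mulVecLin_apply] using hz.apply_eq_smul
  set a : (Fin m ⊕ Fin m) → ℝ := fun i => (z i).re with ha
  set b : (Fin m ⊕ Fin m) → ℝ := fun i => (z i).im with hb
  have hMa : M *ᵥ a = μ.re • a - μ.im • b := by
    funext j
    have h := congrArg Complex.re (congrFun hzeq j)
    simpa [Matrix.mulVec, dotProduct, Matrix.map_apply, Complex.re_sum,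
      Complex.mul_re, ha, hb, Finset.sum_sub_distrib, mul_comm] using h
  have hMb : M *ᵥ b = μ.im • a + μ.re • b := by
    funext j
    have h := congrArg Complex.im (congrFun hzeq j)
    simpa [Matrix.mulVec, dotProduct, Matrix.map_apply, Complex.im_sum,
      Complex.mul_im, ha, hb, Finset.sum_add_distrib, mul_comm, add_comm] using h
  have hab : a ≠ 0 ∨ b ≠ 0 := by
    by_contra hcon
    push_neg at hcon
    apply hz0
    funext i
    exact Complex.ext (by simpa [ha] using congrFun hcon.1 i)
      (by simpa [hb] using congrFun hcon.2 i)
  have hpos : ∀ x : (Fin m ⊕ Fin m) → ℝ, x ≠ 0 → 0 < x ⬝ᵥ A *ᵥ x := fun x hx => by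
    simpa using hA.dotProduct_mulVec_pos hx
  have hnn : ∀ x : (Fin m ⊕ Fin m) → ℝ, 0 ≤ x ⬝ᵥ A *ᵥ x := fun x => by
    simpa using hA.posSemidef.dotProduct_mulVec_nonneg x
  have hs : 0 < a ⬝ᵥ A *ᵥ a + b ⬝ᵥ A *ᵥ b := by
    rcases hab with h | h
    · exact add_pos_of_pos_of_nonneg (hpos a h) (hnn b)
    · exact add_pos_of_nonneg_of_pos (hnn a) (hpos b h)
  have hNanti : (A * M)ᵀ = -(A * M) := by
    rw [hMdef, Matrix.transpose_mul, Matrix.transpose_mul, Jmat_transpose, hAsym]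
    simp [Matrix.mul_neg, Matrix.neg_mul, Matrix.mul_assoc]
  have key : ∀ x : (Fin m ⊕ Fin m) → ℝ, x ⬝ᵥ (A *ᵥ (M *ᵥ x)) = 0 := fun x => by
    rw [Matrix.mulVec_mulVec]
    exact antisym_dot_self _ hNanti x
  have h1 := key a
  have h2 := key b
  rw [hMa] at h1
  rw [hMb] at h2
  simp only [Matrix.mulVec_sub, Matrix.mulVec_add, Matrix.mulVec_smul,
    dotProduct_sub, dotProduct_add, dotProduct_smul, smul_eq_mul] at h1 h2
  have hsym := sym_dot_comm A hAsym a b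
  have hre : μ.re = 0 := by
    have hmul : μ.re * (a ⬝ᵥ A *ᵥ a + b ⬝ᵥ A *ᵥ b) = 0 := by
      linear_combination h1 + h2 + μ.im * hsym
    rcases mul_eq_zero.mp hmul with h | h
    · exact h
    · exact absurd h (ne_of_gt hs)
  have hMa0 : M *ᵥ a = (-μ.im) • b := by
    rw [hMa, hre]; funext i; simp
  have hMb0 : M *ᵥ b = μ.im • a := by
    rw [hMb, hre]; funext i; simp
  have him : μ.im ≠ 0 := by
    intro h0
    have hzero : ∀ x : (Fin m ⊕ Fin m) → ℝ, x ≠ 0 → M *ᵥ x = 0 → False := by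
      intro x hx hMx
      have hJ : Jmat m *ᵥ (A *ᵥ x) = 0 := by
        rwa [Matrix.mulVec_mulVec]
      have h2' := congrArg (fun y => Jmat m *ᵥ y) hJ
      simp only [Matrix.mulVec_mulVec, ← Matrix.mul_assoc, Jmat_mul_Jmat, neg_mul,
        one_mul, Matrix.neg_mulVec, Matrix.mulVec_zero, neg_eq_zero] at h2'
      have := hpos x hx
      rw [h2', dotProduct_zero] at this
      exact lt_irrefl _ this
    rcases hab with h | h
    · exact hzero a h (by rw [hMa0, h0]; funext i; simp)
    · exact hzero b h (by rw [hMb0, h0]; funext i; simp)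
  rcases lt_or_gt_of_ne him with hneg | hposb
  · refine ⟨-μ.im, a, -b, by linarith, ?_, ?_, ?_⟩
    · rw [hMa0]; funext i; simp
    · rw [Matrix.mulVec_neg, hMb0, neg_smul]
    · rcases hab with h | h
      · exact Or.inl h
      · exact Or.inr (neg_ne_zero.mpr h)
  · exact ⟨μ.im, a, b, hposb, hMa0, hMb0, hab⟩

/-- For `H(x,y) = ½⟨A₀x,x⟩ + ½⟨A₁y,y⟩ − 1` with `A₀` positive definite and
`𝕁_{n−k}A₁` hyperbolic, the hypersurface `Σ = H⁻¹(0)` carries a closed characteristic: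
there are `η > 0` and a nonconstant smooth `1`-periodic loop `v = (v₀, v₁)` with
`v₀' = η 𝕁_k A₀ v₀`, `v₁' = η 𝕁_{n−k} A₁ v₁` and `H(v(t)) = 0` for all `t`. -/
theorem stmt_7 (n k : ℕ) (hk : 1 ≤ k) (hkn : k ≤ n - 1)
    (A₀ : Matrix (Fin k ⊕ Fin k) (Fin k ⊕ Fin k) ℝ) (hA₀ : A₀.PosDef)
    (A₁ : Matrix (Fin (n - k) ⊕ Fin (n - k)) (Fin (n - k) ⊕ Fin (n - k)) ℝ)
    (hA₁sym : A₁ᵀ = A₁) (hA₁inv : IsUnit A₁)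
    (hA₁hyp : (Jmat (n - k) * A₁).Hyperbolic) :
    ∃ (η : ℝ) (v₀ : ℝ → (Fin k ⊕ Fin k) → ℝ)
      (v₁ : ℝ → (Fin (n - k) ⊕ Fin (n - k)) → ℝ),
      0 < η ∧ ContDiff ℝ (⊤ : ℕ∞) v₀ ∧ ContDiff ℝ (⊤ : ℕ∞) v₁ ∧
      (∀ t, v₀ (t + 1) = v₀ t) ∧ (∀ t, v₁ (t + 1) = v₁ t) ∧
      (∃ s t : ℝ, v₀ s ≠ v₀ t ∨ v₁ s ≠ v₁ t) ∧
      (∀ t, deriv v₀ t = η • (Jmat k).mulVec (A₀.mulVec (v₀ t))) ∧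
      (∀ t, deriv v₁ t = η • (Jmat (n - k)).mulVec (A₁.mulVec (v₁ t))) ∧
      (∀ t, ((1 / 2) * (A₀.mulVec (v₀ t) ⬝ᵥ v₀ t) - 1) +
        (1 / 2) * (A₁.mulVec (v₁ t) ⬝ᵥ v₁ t) = 0) := by
  obtain ⟨ω, a, b, hω, hMa, hMb, hab⟩ := exists_rotation k hk A₀ hA₀
  -- basic consequences
  have hJu : Jmat k *ᵥ (A₀ *ᵥ a) = (-ω) • b := by rwa [Matrix.mulVec_mulVec]
  have hJw : Jmat k *ᵥ (A₀ *ᵥ b) = ω • a := by rwa [Matrix.mulVec_mulVec]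
  -- quadratic form identities
  have hqeq : A₀ *ᵥ b ⬝ᵥ b = A₀ *ᵥ a ⬝ᵥ a := by
    have h1 : (A₀ *ᵥ a) ⬝ᵥ (Jmat k *ᵥ (A₀ *ᵥ b)) =
        -((Jmat k *ᵥ (A₀ *ᵥ a)) ⬝ᵥ (A₀ *ᵥ b)) := by
      rw [Jmat_antisym]
      ring_nf
    simp only [hJw, hJu, dotProduct_smul, smul_dotProduct, neg_smul,
      neg_dotProduct, neg_neg, smul_eq_mul] at h1
    have h2 : (A₀ *ᵥ a) ⬝ᵥ a = b ⬝ᵥ (A₀ *ᵥ b) := mul_left_cancel₀ (ne_of_gt hω) h1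
    rw [h2, dotProduct_comm]
  have hab0 : A₀ *ᵥ a ⬝ᵥ b = 0 := by
    have h1 : (A₀ *ᵥ a) ⬝ᵥ (Jmat k *ᵥ (A₀ *ᵥ a)) = 0 := by
      have := Jmat_antisym k (A₀ *ᵥ a) (A₀ *ᵥ a)
      have := dotProduct_comm (Jmat k *ᵥ (A₀ *ᵥ a)) (A₀ *ᵥ a)
      linarith [Jmat_antisym k (A₀ *ᵥ a) (A₀ *ᵥ a),
        dotProduct_comm (Jmat k *ᵥ (A₀ *ᵥ a)) (A₀ *ᵥ a)]
    rw [hJu, dotProduct_smul, smul_eq_mul] at h1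
    rcases mul_eq_zero.mp h1 with h | h
    · exact absurd (neg_eq_zero.mp h) (ne_of_gt hω)
    · exact h
  have hba0 : A₀ *ᵥ b ⬝ᵥ a = 0 := by
    have h1 : (A₀ *ᵥ b) ⬝ᵥ (Jmat k *ᵥ (A₀ *ᵥ b)) = 0 := by
      linarith [Jmat_antisym k (A₀ *ᵥ b) (A₀ *ᵥ b),
        dotProduct_comm (Jmat k *ᵥ (A₀ *ᵥ b)) (A₀ *ᵥ b)]
    rw [hJw, dotProduct_smul, smul_eq_mul] at h1
    rcases mul_eq_zero.mp h1 with h | h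
    · exact absurd h (ne_of_gt hω)
    · exact h
  -- positivity of q
  have hq : 0 < A₀ *ᵥ a ⬝ᵥ a := by
    rcases hab with h | h
    · have := hA₀.dotProduct_mulVec_pos h
      simp only [star_trivial] at this
      rw [dotProduct_comm]
      exact this
    · have := hA₀.dotProduct_mulVec_pos h
      simp only [star_trivial] at this
      rw [← hqeq, dotProduct_comm]
      exact this
  set c : ℝ := Real.sqrt (2 / (A₀ *ᵥ a ⬝ᵥ a)) with hcdef
  have hc : 0 < c := Real.sqrt_pos.mpr (by positivity)
  have hc2 : c * c * (A₀ *ᵥ a ⬝ᵥ a) = 2 := by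
    rw [hcdef, Real.mul_self_sqrt (by positivity)]
    field_simp
  set η : ℝ := 2 * Real.pi / ω with hηdef
  have hη : 0 < η := by positivity
  have hηω : η * ω = 2 * Real.pi := div_mul_cancel₀ _ (ne_of_gt hω)
  set v₀ : ℝ → (Fin k ⊕ Fin k) → ℝ := fun t =>
    (c * Real.cos (2 * Real.pi * t)) • a + (-(c * Real.sin (2 * Real.pi * t))) • b
    with hv₀def
  refine ⟨η, v₀, fun _ => 0, hη, ?_, contDiff_const, ?_, fun _ => rfl, ?_, ?_, ?_, ?_⟩
  · -- smoothness
    have h2πt : ContDiff ℝ (⊤ : ℕ∞) (fun t : ℝ => 2 * Real.pi * t) := contDiff_const.mul contDiff_id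
    exact ((contDiff_const.mul (Real.contDiff_cos.comp h2πt)).smul contDiff_const).add
      (((contDiff_const.mul (Real.contDiff_sin.comp h2πt)).neg).smul contDiff_const)
  · -- periodicity
    intro t
    have harg : 2 * Real.pi * (t + 1) = 2 * Real.pi * t + 2 * Real.pi := by ring
    rw [hv₀def]
    simp only [harg, Real.cos_add_two_pi, Real.sin_add_two_pi]
  · -- nonconstancy
    rcases hab with h | h
    · refine ⟨0, 1/2, Or.inl ?_⟩
      have e0 : v₀ 0 = c • a := by
        rw [hv₀def]; norm_num
      have e1 : v₀ (1/2) = (-c) • a := by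
        rw [hv₀def]
        norm_num [show 2 * Real.pi * (1/2) = Real.pi by ring, Real.cos_pi, Real.sin_pi]
      rw [e0, e1]
      intro hEq
      have : (c - -c) • a = 0 := by rw [sub_smul, hEq, sub_self]
      rcases smul_eq_zero.mp this with h' | h'
      · nlinarith
      · exact h h'
    · refine ⟨1/4, -(1/4), Or.inl ?_⟩
      have e0 : v₀ (1/4) = (-c) • b := by
        rw [hv₀def]
        norm_num [show 2 * Real.pi * (1/4) = Real.pi/2 by ring,
          Real.cos_pi_div_two, Real.sin_pi_div_two]
      have e1 : v₀ (-(1/4)) = c • b := by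
        rw [hv₀def]
        norm_num [show 2 * Real.pi * (-(1/4)) = -(Real.pi/2) by ring,
          Real.cos_neg, Real.sin_neg, Real.cos_pi_div_two, Real.sin_pi_div_two]
      rw [e0, e1]
      intro hEq
      have : ((-c) - c) • b = 0 := by rw [sub_smul, hEq, sub_self]
      rcases smul_eq_zero.mp this with h' | h'
      · nlinarith
      · exact h h'
  · -- the ODE for v₀
    intro t
    have hθ : HasDerivAt (fun t : ℝ => 2 * Real.pi * t) (2 * Real.pi) t := by
      simpa using (hasDerivAt_id t).const_mul (2 * Real.pi)
    have h1 : HasDerivAt (fun t : ℝ => c * Real.cos (2 * Real.pi * t))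
        (c * (-Real.sin (2 * Real.pi * t) * (2 * Real.pi))) t := (hθ.cos).const_mul c
    have h2 : HasDerivAt (fun t : ℝ => -(c * Real.sin (2 * Real.pi * t)))
        (-(c * (Real.cos (2 * Real.pi * t) * (2 * Real.pi)))) t :=
      ((hθ.sin).const_mul c).neg
    have hv : HasDerivAt v₀
        ((c * (-Real.sin (2 * Real.pi * t) * (2 * Real.pi))) • a +
          (-(c * (Real.cos (2 * Real.pi * t) * (2 * Real.pi)))) • b) t :=
      (h1.smul_const a).add (h2.smul_const b)
    rw [hv.deriv]
    have hexp : Jmat k *ᵥ (A₀ *ᵥ (v₀ t)) =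
        (c * Real.cos (2 * Real.pi * t)) • ((-ω) • b) +
          (-(c * Real.sin (2 * Real.pi * t))) • (ω • a) := by
      rw [hv₀def]
      simp only [Matrix.mulVec_add, Matrix.mulVec_smul, hJu, hJw]
    rw [hexp]
    have hω' : ω ≠ 0 := ne_of_gt hω
    have hinv : ω * ω⁻¹ = 1 := mul_inv_cancel₀ hω'
    match_scalars
    · linear_combination (c * Real.sin (2 * Real.pi * t)) * hηω
    · linear_combination (c * Real.cos (2 * Real.pi * t)) * hηω
  · -- the ODE for v₁ (constant zero)
    intro t
    simp [Matrix.mulVec_zero]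
  · -- the energy identity
    intro t
    have hexp : A₀ *ᵥ (v₀ t) ⬝ᵥ (v₀ t) = 2 := by
      rw [hv₀def]
      simp only [Matrix.mulVec_add, Matrix.mulVec_smul, add_dotProduct,
        dotProduct_add, smul_dotProduct, dotProduct_smul, smul_eq_mul,
        hab0, hba0, hqeq, mul_zero]
      have hpyth := Real.sin_sq_add_cos_sq (2 * Real.pi * t)
      nlinarith [hc2, hpyth]
    rw [hexp]
    simp [Matrix.mulVec_zero]
end

section
/- Let X : ℝ^N → ℝ^N be a vector field satisfying ‖X(x) − X(y)‖ ≤ L‖x − y‖ for all x, y ∈ ℝ^N, let η ∈ ℝ, and let v : ℝ → ℝ^N be a nonconstant differentiable 1-periodic solution of v'(t) = η X(v(t)). Then |η| · L ≥ 2π. -/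
/-!
Yorke's argument. For a nonconstant `T`-periodic solution `v` of `v' = F v` with `F`
`K`-Lipschitz, pick a shift `h` with `v (· + h) ≠ v` and set `u := v (· + h) - v`. Then `u` is
`T`-periodic with mean zero over a period, and `‖u'‖ ≤ K ‖u‖` pointwise. Wirtinger's inequality
`∫ ‖u‖² ≤ (T / 2π)² ∫ ‖u'‖²`, proved coordinatewise from Parseval's identity, gives
`∫ ‖u‖² ≤ (T K / 2π)² ∫ ‖u‖²` with `∫ ‖u‖² > 0`, hence `2π ≤ T K`.
-/

open MeasureTheory Set Real Complex
open scoped NNReal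

lemma ContinuousOn.memLp_two_restrict_Ioc {E : Type*} [NormedAddCommGroup E] {f : ℝ → E}
    {a b : ℝ} (hf : ContinuousOn f (Icc a b)) : MemLp f 2 (volume.restrict (Ioc a b)) := by
  refine (memLp_two_iff_integrable_sq_norm
    ((hf.mono Ioc_subset_Icc_self).aestronglyMeasurable measurableSet_Ioc)).2 ?_
  exact (hf.norm.pow 2).integrableOn_Icc.mono_set Ioc_subset_Icc_self

lemma MeasureTheory.MemLp.intervalIntegrable_norm_sq {E : Type*} [NormedAddCommGroup E]
    {f : ℝ → E} {a b : ℝ} (hab : a ≤ b) (hf : MemLp f 2 (volume.restrict (Ioc a b))) :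
    IntervalIntegrable (fun x => ‖f x‖ ^ 2) volume a b :=
  (intervalIntegrable_iff_integrableOn_Ioc_of_le hab).2 hf.integrable_norm_pow'

lemma norm_fourierCoeffOn_le_of_hasDerivAt {a b : ℝ} (hab : a < b) {f f' : ℝ → ℂ}
    (hf : ∀ x ∈ Icc a b, HasDerivAt f (f' x) x) (hf' : IntervalIntegrable f' volume a b)
    (hfab : f a = f b) (hmean : ∫ x in a..b, f x = 0) (n : ℤ) :
    ‖fourierCoeffOn hab f n‖ ≤ (b - a) / (2 * π) * ‖fourierCoeffOn hab f' n‖ := by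
  have hba : 0 < b - a := sub_pos.2 hab
  rcases eq_or_ne n 0 with rfl | hn
  · rw [fourierCoeffOn_eq_integral]
    simp only [neg_zero, fourier_zero, one_smul, hmean, smul_zero, norm_zero]
    positivity
  rw [fourierCoeffOn_of_hasDerivAt hab hn (by rwa [uIcc_of_le hab.le]) hf', hfab, sub_self,
    mul_zero, zero_sub, mul_neg, ← neg_mul, norm_mul, norm_mul, ← mul_assoc]
  have hn1 : (1 : ℝ) ≤ |(n : ℝ)| := by exact_mod_cast Int.one_le_abs hn
  have hfactor : ‖-(1 / (-2 * π * I * n))‖ * ‖(b : ℂ) - a‖ = (b - a) / (2 * π * |(n : ℝ)|) := by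
    rw [← ofReal_sub, norm_real, norm_of_nonneg hba.le]
    simp [abs_of_pos pi_pos, div_eq_mul_inv]
    ring
  rw [hfactor]
  refine mul_le_mul_of_nonneg_right ?_ (norm_nonneg _)
  exact div_le_div_of_nonneg_left hba.le (by positivity)
    (le_mul_of_one_le_right (by positivity) hn1)

theorem wirtinger_inequality_complex {a b : ℝ} (hab : a < b) {f f' : ℝ → ℂ}
    (hf : ∀ x ∈ Icc a b, HasDerivAt f (f' x) x) (hf' : MemLp f' 2 (volume.restrict (Ioc a b)))
    (hfab : f a = f b) (hmean : ∫ x in a..b, f x = 0) :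
    ∫ x in a..b, ‖f x‖ ^ 2 ≤ ((b - a) / (2 * π)) ^ 2 * ∫ x in a..b, ‖f' x‖ ^ 2 := by
  have hfc : ContinuousOn f (Icc a b) := fun x hx => (hf x hx).continuousAt.continuousWithinAt
  have hf'int : IntervalIntegrable f' volume a b :=
    (intervalIntegrable_iff_integrableOn_Ioc_of_le hab.le).2 (hf'.integrable one_le_two)
  have hF := hasSum_sq_fourierCoeffOn hab hfc.memLp_two_restrict_Ioc
  have hF' := (hasSum_sq_fourierCoeffOn hab hf').mul_left (((b - a) / (2 * π)) ^ 2)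
  have hle (n : ℤ) : ‖fourierCoeffOn hab f n‖ ^ 2
      ≤ ((b - a) / (2 * π)) ^ 2 * ‖fourierCoeffOn hab f' n‖ ^ 2 := by
    rw [← mul_pow]
    exact pow_le_pow_left₀ (norm_nonneg _)
      (norm_fourierCoeffOn_le_of_hasDerivAt hab hf hf'int hfab hmean n) 2
  have := hasSum_le hle hF hF'
  rwa [smul_eq_mul, smul_eq_mul, mul_left_comm,
    mul_le_mul_iff_right₀ (inv_pos.2 (sub_pos.2 hab))] at this

theorem wirtinger_inequality {E : Type*} [NormedAddCommGroup E] [InnerProductSpace ℝ E]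
    [FiniteDimensional ℝ E] {a b : ℝ} (hab : a < b) {f f' : ℝ → E}
    (hf : ∀ x ∈ Icc a b, HasDerivAt f (f' x) x) (hf' : MemLp f' 2 (volume.restrict (Ioc a b)))
    (hfab : f a = f b) (hmean : ∫ x in a..b, f x = 0) :
    ∫ x in a..b, ‖f x‖ ^ 2 ≤ ((b - a) / (2 * π)) ^ 2 * ∫ x in a..b, ‖f' x‖ ^ 2 := by
  let e := stdOrthonormalBasis ℝ E
  let coord (i : Fin (Module.finrank ℝ E)) : E →L[ℝ] ℂ := ofRealCLM.comp (innerSL ℝ (e i))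
  have hcoord (x : E) : ∑ i, ‖coord i x‖ ^ 2 = ‖x‖ ^ 2 := by
    simpa [coord] using e.sum_sq_norm_inner_right x
  have hsplit {w : ℝ → E} (hw : MemLp w 2 (volume.restrict (Ioc a b))) :
      ∫ x in a..b, ‖w x‖ ^ 2 = ∑ i, ∫ x in a..b, ‖coord i (w x)‖ ^ 2 := by
    have hint (i : Fin (Module.finrank ℝ E)) :
        IntervalIntegrable (fun x => ‖coord i (w x)‖ ^ 2) volume a b :=
      ((coord i).comp_memLp' hw).intervalIntegrable_norm_sq hab.le
    rw [← intervalIntegral.integral_finsetSum fun i _ => hint i]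
    simp only [hcoord]
  have hfc : ContinuousOn f (Icc a b) := fun x hx => (hf x hx).continuousAt.continuousWithinAt
  have hfint : IntervalIntegrable f volume a b := hfc.intervalIntegrable_of_Icc hab.le
  rw [hsplit hfc.memLp_two_restrict_Ioc, hsplit hf', Finset.mul_sum]
  refine Finset.sum_le_sum fun i _ => wirtinger_inequality_complex hab
    (fun x hx => (coord i).hasFDerivAt.comp_hasDerivAt x (hf x hx)) ((coord i).comp_memLp' hf')
    (by rw [hfab]) ?_
  rw [(coord i).intervalIntegral_comp_comm hfint, hmean, map_zero]

section Periodic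

variable {E : Type*} [NormedAddCommGroup E] {T : ℝ}

lemma Function.Periodic.intervalIntegral_comp_add_sub_eq_zero [NormedSpace ℝ E] {v : ℝ → E}
    (hv : Function.Periodic v T) (hc : Continuous v) (h : ℝ) :
    ∫ r in (0)..T, (v (r + h) - v r) = 0 := by
  have hch : Continuous fun r => v (r + h) := hc.comp (continuous_add_const h)
  rw [intervalIntegral.integral_sub (hch.intervalIntegrable 0 T) (hc.intervalIntegrable 0 T),
    intervalIntegral.integral_comp_add_right v h, sub_eq_zero, zero_add, add_comm T,
    hv.intervalIntegral_add_eq h 0, zero_add]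

lemma Function.Periodic.intervalIntegral_norm_sq_pos {u : ℝ → E} (hu : Function.Periodic u T)
    (hT : 0 < T) (hc : Continuous u) {s : ℝ} (hs : u s ≠ 0) :
    0 < ∫ r in (0)..T, ‖u r‖ ^ 2 := by
  obtain ⟨y, hy, hsy⟩ := hu.exists_mem_Ico₀ hT s
  refine intervalIntegral.integral_pos hT (hc.norm.pow 2).continuousOn
    (fun r _ => by positivity) ⟨y, Ico_subset_Icc_self hy, ?_⟩
  rw [← hsy]
  positivity

end Periodic

theorem LipschitzWith.two_pi_le_mul_of_periodic_solution {E : Type*} [NormedAddCommGroup E]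
    [InnerProductSpace ℝ E] [FiniteDimensional ℝ E] {F : E → E} {K : ℝ≥0} (hF : LipschitzWith K F)
    {v : ℝ → E} {T : ℝ} (hT : 0 < T) (hv : ∀ t, HasDerivAt v (F (v t)) t)
    (hper : Function.Periodic v T) (hnc : ∃ s t, v s ≠ v t) :
    2 * π ≤ T * K := by
  obtain ⟨s, t, hst⟩ := hnc
  set h := t - s
  set u : ℝ → E := fun r => v (r + h) - v r
  set u' : ℝ → E := fun r => F (v (r + h)) - F (v r)
  have hu (r : ℝ) : HasDerivAt u (u' r) r := ((hv (r + h)).comp_add_const r h).sub (hv r)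
  have hcv : Continuous v := continuous_iff_continuousAt.2 fun r => (hv r).continuousAt
  have hcvh : Continuous fun r => v (r + h) := hcv.comp (continuous_add_const h)
  have hcu : Continuous u := hcvh.sub hcv
  have hcu' : Continuous u' := (hF.continuous.comp hcvh).sub (hF.continuous.comp hcv)
  have huper : Function.Periodic u T := fun r => by
    simp only [u, add_right_comm r T h, hper _]
  have hus : u s ≠ 0 := by simpa [u, h, sub_eq_zero] using hst.symm
  have hpos : 0 < ∫ r in (0)..T, ‖u r‖ ^ 2 := huper.intervalIntegral_norm_sq_pos hT hcu hus
  have hwirtinger := wirtinger_inequality hT (fun r _ => hu r)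
    hcu'.continuousOn.memLp_two_restrict_Ioc (by simpa using (huper 0).symm)
    (hper.intervalIntegral_comp_add_sub_eq_zero hcv h)
  rw [sub_zero] at hwirtinger
  have hlip : ∫ r in (0)..T, ‖u' r‖ ^ 2 ≤ K ^ 2 * ∫ r in (0)..T, ‖u r‖ ^ 2 := by
    rw [← intervalIntegral.integral_const_mul]
    refine intervalIntegral.integral_mono_on hT.le ((hcu'.norm.pow 2).intervalIntegrable 0 T)
      ((continuous_const.mul (hcu.norm.pow 2)).intervalIntegrable 0 T) fun r _ => ?_
    rw [← mul_pow]
    exact pow_le_pow_left₀ (norm_nonneg _) (hF.norm_sub_le _ _) 2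
  have hsq : (2 * π) ^ 2 * ∫ r in (0)..T, ‖u r‖ ^ 2 ≤ (T * K) ^ 2 * ∫ r in (0)..T, ‖u r‖ ^ 2 :=
    calc (2 * π) ^ 2 * ∫ r in (0)..T, ‖u r‖ ^ 2
        ≤ (2 * π) ^ 2 * ((T / (2 * π)) ^ 2 * (K ^ 2 * ∫ r in (0)..T, ‖u r‖ ^ 2)) := by
          gcongr
          exact hwirtinger.trans (by gcongr)
      _ = (T * K) ^ 2 * ∫ r in (0)..T, ‖u r‖ ^ 2 := by field_simp
  exact (pow_le_pow_iff_left₀ (by positivity) (by positivity) two_ne_zero).1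
    (le_of_mul_le_mul_right hsq hpos)

/-- If `X` is an `L`-Lipschitz vector field on Euclidean `ℝ^N` and `v` is a
nonconstant differentiable `1`-periodic solution of `v' = η X(v)`, then `|η| · L ≥ 2π`. -/
theorem stmt_12 (N : ℕ) (X : EuclideanSpace ℝ (Fin N) → EuclideanSpace ℝ (Fin N))
    (L : ℝ) (hX : ∀ x y, ‖X x - X y‖ ≤ L * ‖x - y‖)
    (η : ℝ) (v : ℝ → EuclideanSpace ℝ (Fin N))
    (hv : ∀ t, HasDerivAt v (η • X (v t)) t)
    (hper : ∀ t, v (t + 1) = v t)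
    (hnc : ∃ s t : ℝ, v s ≠ v t) :
    2 * Real.pi ≤ |η| * L := by
  obtain ⟨s, t, hst⟩ := hnc
  have hL : 0 ≤ L := nonneg_of_mul_nonneg_left ((norm_nonneg _).trans (hX (v s) (v t)))
    (norm_pos_iff.2 (sub_ne_zero.2 hst))
  have hXL : LipschitzWith L.toNNReal X :=
    LipschitzWith.of_dist_le_mul fun x y => by
      rw [dist_eq_norm, dist_eq_norm, Real.coe_toNNReal L hL]
      exact hX x y
  have := ((lipschitzWith_smul η).comp hXL).two_pi_le_mul_of_periodic_solution one_pos hv hper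
    ⟨s, t, hst⟩
  rwa [one_mul, NNReal.coe_mul, coe_nnnorm, Real.norm_eq_abs, Real.coe_toNNReal L hL] at this
end

section
/- Let A be a real symmetric 2n×2n matrix, H(x) := ½⟨Ax,x⟩ − 1, and fix η ∈ ℝ. Consider the set 𝒩 := {x ∈ ℝ^{2n} : H(x) = 0 and exp(η𝕁_n A)x = x}. Then for every p ∈ 𝒩, the tangent cone of 𝒩 at p equals the linear subspace {ξ ∈ ℝ^{2n} : ⟨Ap, ξ⟩ = 0 and exp(η𝕁_n A)ξ = ξ}. (This expresses that the closed orbits of the Hamiltonian flow φ^t(x) = exp(t𝕁_n A)x on Σ = H^{−1}(0) are of Morse–Bott type: 𝒩 is a submanifold with tangent space ker(dH_p) ∩ ker(Dφ^η − Id).) -/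
open Matrix Filter

/-- The tangent cone of a set `S ⊆ E` at `p ∈ S`: the set of vectors `ξ` for which there are
`x_i ∈ S` with `x_i → p` and positive reals `c_i → ∞` with `c_i (x_i − p) → ξ`. -/
def tangentCone' {E : Type*} [NormedAddCommGroup E] [NormedSpace ℝ E]
    (S : Set E) (p : E) : Set E :=
  {ξ | ∃ (x : ℕ → E) (c : ℕ → ℝ), (∀ i, x i ∈ S) ∧ Tendsto x atTop (nhds p) ∧
    (∀ i, 0 < c i) ∧ Tendsto c atTop atTop ∧
    Tendsto (fun i => c i • (x i - p)) atTop (nhds ξ)}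

/-!
The set `𝒩` is the intersection of the quadric `⟨Ax, x⟩ = 2` with the fixed space of the linear
map `exp(η𝕁A)`. A tangent vector of a set lying in a fibre of a differentiable map is killed by
the derivative, which gives `⟨Ap, ξ⟩ = 0` (the derivative of `x ↦ ⟨Ax, x⟩` is `2⟨Ap, ·⟩`) and
`exp(η𝕁A)ξ = ξ`. Conversely, such a `ξ` is the velocity at `0` of
`t ↦ √(2 / ⟨A(p + tξ), p + tξ⟩) • (p + tξ)`, which stays in `𝒩`: since `⟨Ap, ξ⟩ = 0`, the
denominator is `2 + t²⟨Aξ, ξ⟩`, positive for small `t`, and its derivative vanishes at `0`.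
-/

open Set Topology

variable {E : Type*} [NormedAddCommGroup E] [NormedSpace ℝ E]

theorem tangentCone'_subset_tangentConeAt {S : Set E} {p : E} :
    tangentCone' S p ⊆ tangentConeAt ℝ S p := by
  rintro ξ ⟨x, c, hxS, hx, -, -, hcx⟩
  refine mem_tangentConeAt_of_seq atTop c (fun i => x i - p) ?_ ?_ hcx
  · simpa using hx.sub_const p
  · exact Eventually.of_forall fun i => by simpa using hxS i

theorem map_eq_zero_of_mem_tangentCone'_of_subset_fiber {F : Type*} [NormedAddCommGroup F]
    [NormedSpace ℝ F] {S : Set E} {p : E} {f : E → F} {f' : E →L[ℝ] F}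
    (hf : HasFDerivAt f f' p) (hS : S ⊆ f ⁻¹' {f p}) {ξ : E} (hξ : ξ ∈ tangentCone' S p) :
    f' ξ = 0 := by
  have hsingleton : ¬AccPt (f p) (𝓟 {f p}) := fun h =>
    let ⟨_, hy, hne⟩ := accPt_iff_nhds.mp h univ univ_mem
    hne hy.2
  simpa using tangentConeAt_subset_zero hsingleton <|
    tangentConeAt_mono (image_subset_iff.mpr hS) <|
    hf.hasFDerivWithinAt.mapsTo_tangent_cone (tangentCone'_subset_tangentConeAt hξ)

theorem mem_tangentCone'_of_hasDerivWithinAt {S : Set E} {γ : ℝ → E} {ξ : E}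
    (hγ : HasDerivWithinAt γ ξ (Ioi 0) 0) (hS : ∀ᶠ t in 𝓝[>] 0, γ t ∈ S) :
    ξ ∈ tangentCone' S (γ 0) := by
  obtain ⟨u, hu, huS⟩ := frequently_iff_seq_forall.mp (hS.and self_mem_nhdsWithin).frequently
  refine ⟨γ ∘ u, fun i => (u i)⁻¹, fun i => (huS i).1, hγ.continuousWithinAt.tendsto.comp hu,
    fun i => inv_pos.mpr (huS i).2, tendsto_inv_nhdsGT_zero.comp hu, ?_⟩
  refine ((hasDerivWithinAt_iff_tendsto_slope.mp hγ).comp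
    (tendsto_nhdsWithin_mono_right (by simp) hu)).congr fun i => ?_
  simp [slope_def_module]

section Quadric

variable (B : E →L[ℝ] E →L[ℝ] ℝ)

theorem ContinuousLinearMap.hasFDerivAt_apply_self (p : E) :
    HasFDerivAt (fun x => B x x) (B p + B.flip p) p :=
  (B.hasFDerivAt_of_bilinear (hasFDerivAt_id p) (hasFDerivAt_id p)).congr_fderiv <| by
    ext ξ
    simp

theorem hasDerivAt_div_add_sq_mul {c : ℝ} (hc : c ≠ 0) (a : ℝ) :
    HasDerivAt (fun t : ℝ => c / (c + t ^ 2 * a)) 0 0 := by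
  simpa using (hasDerivAt_const (0 : ℝ) c).fun_div
    (((hasDerivAt_pow 2 (0 : ℝ)).mul_const a).const_add c) (by simpa using hc)

noncomputable def levelCurve (p ξ : E) (t : ℝ) : E :=
  √(B p p / B (p + t • ξ) (p + t • ξ)) • (p + t • ξ)

variable {B} (hB : ∀ x y, B x y = B y x) {p ξ : E}
include hB

theorem apply_add_smul_self_of_apply_eq_zero (hpξ : B p ξ = 0) (t : ℝ) :
    B (p + t • ξ) (p + t • ξ) = B p p + t ^ 2 * B ξ ξ := by
  simp only [map_add, map_smul, _root_.add_apply, _root_.smul_apply, smul_eq_mul, hpξ, hB ξ p]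
  ring

theorem hasDerivAt_levelCurve (hp : B p p ≠ 0) (hpξ : B p ξ = 0) :
    HasDerivAt (levelCurve B p ξ) ξ 0 := by
  have hr : HasDerivAt (fun t : ℝ => √(B p p / (B p p + t ^ 2 * B ξ ξ))) 0 0 := by
    simpa using (hasDerivAt_div_add_sq_mul hp (B ξ ξ)).sqrt (by simp [hp])
  have hline : HasDerivAt (fun t : ℝ => p + t • ξ) ξ 0 := by
    simpa using ((hasDerivAt_id (0 : ℝ)).smul_const ξ).const_add p
  unfold levelCurve
  simp_rw [apply_add_smul_self_of_apply_eq_zero hB hpξ]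
  simpa [hp] using hr.fun_smul hline

theorem eventually_levelCurve_apply_self (hp : B p p ≠ 0) (hpξ : B p ξ = 0) :
    ∀ᶠ t in 𝓝 0, B (levelCurve B p ξ t) (levelCurve B p ξ t) = B p p := by
  have hpos : ∀ᶠ t in 𝓝 (0 : ℝ), 0 < B p p / (B p p + t ^ 2 * B ξ ξ) :=
    (hasDerivAt_div_add_sq_mul hp (B ξ ξ)).continuousAt.eventually
      (lt_mem_nhds (by simp [hp]))
  filter_upwards [hpos] with t ht
  have hq : B p p + t ^ 2 * B ξ ξ ≠ 0 := fun h => by simp [h] at ht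
  simp only [levelCurve, map_smul, _root_.smul_apply, smul_eq_mul,
    apply_add_smul_self_of_apply_eq_zero hB hpξ]
  rw [← mul_assoc, Real.mul_self_sqrt ht.le, div_mul_cancel₀ _ hq]

theorem tangentCone'_setOf_apply_self_eq_and_fixed (M : E →L[ℝ] E) (hp : B p p ≠ 0)
    (hMp : M p = p) :
    tangentCone' {x | B x x = B p p ∧ M x = x} p = {ξ | B p ξ = 0 ∧ M ξ = ξ} := by
  ext ξ
  constructor
  · intro hξ
    have hBξ : B p ξ + B ξ p = 0 :=
      map_eq_zero_of_mem_tangentCone'_of_subset_fiber (B.hasFDerivAt_apply_self p)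
        (fun x hx => hx.1) hξ
    have hMξ : M ξ - ξ = 0 :=
      map_eq_zero_of_mem_tangentCone'_of_subset_fiber (M - 1).hasFDerivAt
        (fun x hx => by simp [hx.2, hMp]) hξ
    exact ⟨by linarith [hB ξ p], sub_eq_zero.mp hMξ⟩
  · rintro ⟨hpξ, hMξ⟩
    have hmem : ∀ᶠ t in 𝓝[>] 0, levelCurve B p ξ t ∈ {x | B x x = B p p ∧ M x = x} := by
      filter_upwards [eventually_nhdsWithin_of_eventually_nhds
        (eventually_levelCurve_apply_self hB hp hpξ)] with t ht
      exact ⟨ht, by simp [levelCurve, hMp, hMξ]⟩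
    simpa [levelCurve, hp] using
      mem_tangentCone'_of_hasDerivWithinAt (hasDerivAt_levelCurve hB hp hpξ).hasDerivWithinAt hmem

end Quadric

theorem Matrix.tangentCone'_setOf_mulVec_dotProduct_eq_and_fixed {ι : Type*} [Fintype ι]
    {A : Matrix ι ι ℝ} (hA : Aᵀ = A) (M : Matrix ι ι ℝ) {p : ι → ℝ} (hp : A *ᵥ p ⬝ᵥ p ≠ 0)
    (hMp : M *ᵥ p = p) :
    tangentCone' {x | A *ᵥ x ⬝ᵥ x = A *ᵥ p ⬝ᵥ p ∧ M *ᵥ x = x} p =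
      {ξ | A *ᵥ p ⬝ᵥ ξ = 0 ∧ M *ᵥ ξ = ξ} := by
  set B := ((dotProductBilin ℝ ℝ).comp (mulVecLin A)).toContinuousBilinearMap
  have hBapply : ∀ x y, B x y = A *ᵥ x ⬝ᵥ y := fun _ _ => rfl
  have hB : ∀ x y, B x y = B y x := fun x y => by
    rw [hBapply, hBapply, ← vecMul_transpose, hA, ← dotProduct_mulVec, dotProduct_comm]
  simpa [hBapply] using tangentCone'_setOf_apply_self_eq_and_fixed hB
    (mulVecLin M).toContinuousLinearMap (by rwa [hBapply]) hMp

/-- For `𝒩 = {x : H(x) = 0, exp(η𝕁_nA)x = x}` with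
`H(x) = ½⟨Ax,x⟩ − 1`, at every `p ∈ 𝒩` the tangent cone of `𝒩` equals
`{ξ : ⟨Ap, ξ⟩ = 0 and exp(η𝕁_nA)ξ = ξ}` (Morse–Bott property of the closed orbits). -/
theorem stmt_13 (n : ℕ) (A : Matrix (Fin n ⊕ Fin n) (Fin n ⊕ Fin n) ℝ)
    (hA : Aᵀ = A) (η : ℝ)
    (𝒩 : Set ((Fin n ⊕ Fin n) → ℝ))
    (h𝒩 : 𝒩 = {x | (1 / 2) * (A.mulVec x ⬝ᵥ x) - 1 = 0 ∧
      (NormedSpace.exp (η • (Jmat n * A))).mulVec x = x})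
    (p : (Fin n ⊕ Fin n) → ℝ) (hp : p ∈ 𝒩) :
    tangentCone' 𝒩 p =
      {ξ | A.mulVec p ⬝ᵥ ξ = 0 ∧ (NormedSpace.exp (η • (Jmat n * A))).mulVec ξ = ξ} := by
  subst h𝒩
  obtain ⟨hH, hfix⟩ := hp
  have hquad : A *ᵥ p ⬝ᵥ p = 2 := by linarith
  have hlevel : ∀ x : (Fin n ⊕ Fin n) → ℝ, (1 / 2) * (A *ᵥ x ⬝ᵥ x) - 1 = 0 ↔ A *ᵥ x ⬝ᵥ x = 2 :=
    fun x => by constructor <;> intro h <;> linarith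
  simp_rw [hlevel, ← hquad]
  exact Matrix.tangentCone'_setOf_mulVec_dotProduct_eq_and_fixed hA _ (by norm_num [hquad]) hfix
end
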